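/- In the model of H²×R, the distance from the base point P₁ = (1,0,0) to a point P₂ = (d,e,f) with d²−e²−f² > 0 and d > 0 equals √( arccosh(d/√(d²−e²−f²))² + (log √(d²−e²−f²))² ). -/

import Mathlib

open Real

noncomputable def arcosh (x : ℝ) : ℝ := Real.log (x + Real.sqrt (x ^ 2 - 1))

/-!
Since the metric is dt² + dr² + sinh²r dα², the projection (t, r, α) ↦ t + r i onto the
Euclidean plane does not increase the length of paths, so every path from the base point
to a point with coordinates (t, r, α) has length at least √(t² + r²). The straight segment
τ ↦ (τ t, τ r, α) attains this bound. The coordinates of (d, e, f) are determined up to the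
sign of r and the angle: e^{2t} = d² − e² − f² and cosh r = d e^{−t}.
-/

theorem norm_sub_le_integral_norm_deriv {E : Type*} [NormedAddCommGroup E] [NormedSpace ℝ E]
    [CompleteSpace E] {γ γ' : ℝ → E} {a b : ℝ} (hab : a ≤ b)
    (hγ : ∀ τ, HasDerivAt γ (γ' τ) τ) (hγ' : Continuous γ') :
    ‖γ b - γ a‖ ≤ ∫ τ in a..b, ‖γ' τ‖ := by
  rw [← intervalIntegral.integral_eq_sub_of_hasDerivAt (fun τ _ => hγ τ)
    (hγ'.intervalIntegrable a b)]
  exact intervalIntegral.norm_integral_le_integral_norm hab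

noncomputable def h2rPathLength (c c' : ℝ → Fin 3 → ℝ) : ℝ :=
  ∫ τ in (0:ℝ)..1, √(c' τ 0 ^ 2 + c' τ 1 ^ 2 + sinh (c τ 1) ^ 2 * c' τ 2 ^ 2)

theorem h2rPathLength_line (t r α : ℝ) :
    h2rPathLength (fun τ => ![τ * t, τ * r, α]) (fun _ => ![t, r, 0]) = √(t ^ 2 + r ^ 2) := by
  simp [h2rPathLength]

theorem sqrt_sq_add_sq_le_h2rPathLength {c c' : ℝ → Fin 3 → ℝ}
    (hc : ∀ τ, HasDerivAt c (c' τ) τ) (hc' : Continuous c') :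
    √((c 1 0 - c 0 0) ^ 2 + (c 1 1 - c 0 1) ^ 2) ≤ h2rPathLength c c' := by
  have hci (i : Fin 3) (τ : ℝ) : HasDerivAt (fun τ => c τ i) (c' τ i) τ :=
    hasDerivAt_pi.1 (hc τ) i
  have hcont : Continuous c := continuous_iff_continuousAt.2 fun τ => (hc τ).continuousAt
  have hproj (τ : ℝ) : HasDerivAt (fun τ => (c τ 0 : ℂ) + c τ 1 * Complex.I)
      (c' τ 0 + c' τ 1 * Complex.I) τ :=
    (hci 0 τ).ofReal_comp.add ((hci 1 τ).ofReal_comp.mul_const _)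
  calc √((c 1 0 - c 0 0) ^ 2 + (c 1 1 - c 0 1) ^ 2)
      = ‖((c 1 0 : ℂ) + c 1 1 * Complex.I) - (c 0 0 + c 0 1 * Complex.I)‖ := by
        rw [← Complex.norm_add_mul_I]; push_cast; ring_nf
    _ ≤ ∫ τ in (0:ℝ)..1, ‖(c' τ 0 : ℂ) + c' τ 1 * Complex.I‖ :=
        norm_sub_le_integral_norm_deriv zero_le_one hproj (by fun_prop)
    _ ≤ h2rPathLength c c' := by
        refine intervalIntegral.integral_mono_on zero_le_one ?_ ?_ fun τ _ => ?_
        · exact (by fun_prop : Continuous _).intervalIntegrable _ _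
        · exact (by fun_prop : Continuous _).intervalIntegrable _ _
        · rw [Complex.norm_add_mul_I]
          exact Real.sqrt_le_sqrt (le_add_of_nonneg_right (by positivity))

theorem cylindrical_coords_eq {t r α d e f : ℝ} (hd : exp t * cosh r = d)
    (he : exp t * sinh r * cos α = e) (hf : exp t * sinh r * sin α = f) :
    log √(d ^ 2 - e ^ 2 - f ^ 2) = t ∧ Real.arcosh (d / √(d ^ 2 - e ^ 2 - f ^ 2)) = |r| := by
  have hρ : √(d ^ 2 - e ^ 2 - f ^ 2) = exp t := by
    rw [← sqrt_sq (exp_pos t).le, ← hd, ← he, ← hf]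
    congr 1
    linear_combination exp t ^ 2 * cosh_sq_sub_sinh_sq r -
      (exp t * sinh r) ^ 2 * sin_sq_add_cos_sq α
  rw [hρ, log_exp, ← hd, mul_div_cancel_left₀ _ (exp_pos t).ne', ← cosh_abs,
    arcosh_cosh (abs_nonneg r)]
  exact ⟨rfl, rfl⟩

theorem cylindrical_coords_exist {d e f : ℝ} (h : 0 < d ^ 2 - e ^ 2 - f ^ 2) (hd : 0 < d) :
    let ρ := √(d ^ 2 - e ^ 2 - f ^ 2)
    let r := Real.arcosh (d / ρ)
    let α := Complex.arg (e + f * Complex.I)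
    exp (log ρ) * cosh r = d ∧ exp (log ρ) * sinh r * cos α = e ∧
      exp (log ρ) * sinh r * sin α = f := by
  intro ρ r α
  have hρ : 0 < ρ := sqrt_pos.2 h
  have hρsq : ρ ^ 2 = d ^ 2 - e ^ 2 - f ^ 2 := sq_sqrt h.le
  have hdρ : 1 ≤ d / ρ := (one_le_div hρ).2 (by nlinarith)
  have hsinh : ρ * sinh r = ‖(e : ℂ) + f * Complex.I‖ := by
    have : e ^ 2 + f ^ 2 = ρ ^ 2 * ((d / ρ) ^ 2 - 1) := by field_simp; linarith
    rw [sinh_arcosh hdρ, Complex.norm_add_mul_I, this, sqrt_mul (sq_nonneg ρ), sqrt_sq hρ.le]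
  rw [exp_log hρ, cosh_arcosh hdρ, hsinh, Complex.norm_mul_cos_arg, Complex.norm_mul_sin_arg]
  exact ⟨by field_simp, by simp, by simp⟩

theorem h2r_distance_formula (d e f : ℝ) (h : 0 < d ^ 2 - e ^ 2 - f ^ 2) (hd : 0 < d) :
    sInf {L : ℝ | ∃ c c' : ℝ → (Fin 3 → ℝ),
      (∀ τ, HasDerivAt c (c' τ) τ) ∧ Continuous c' ∧
      -- the endpoint at τ = 0 is the base point (1,0,0): t = 0, r = 0
      c 0 0 = 0 ∧ c 0 1 = 0 ∧
      -- the endpoint at τ = 1 has Cartesian coordinates (d,e,f)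
      Real.exp (c 1 0) * Real.cosh (c 1 1) = d ∧
      Real.exp (c 1 0) * Real.sinh (c 1 1) * Real.cos (c 1 2) = e ∧
      Real.exp (c 1 0) * Real.sinh (c 1 1) * Real.sin (c 1 2) = f ∧
      L = ∫ τ in (0:ℝ)..1,
        Real.sqrt ((c' τ 0) ^ 2 + (c' τ 1) ^ 2 +
          (Real.sinh (c τ 1)) ^ 2 * (c' τ 2) ^ 2)} =
    Real.sqrt ((_root_.arcosh (d / Real.sqrt (d ^ 2 - e ^ 2 - f ^ 2))) ^ 2 +
      (Real.log (Real.sqrt (d ^ 2 - e ^ 2 - f ^ 2))) ^ 2) := by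
  set t := log √(d ^ 2 - e ^ 2 - f ^ 2)
  set r := Real.arcosh (d / √(d ^ 2 - e ^ 2 - f ^ 2))
  set α := Complex.arg (e + f * Complex.I)
  obtain ⟨hd', he', hf'⟩ := cylindrical_coords_exist h hd
  refine IsLeast.csInf_eq ⟨⟨fun τ => ![τ * t, τ * r, α], fun _ => ![t, r, 0], fun τ => ?_,
    continuous_const, by simp, by simp, by simpa using hd', by simpa using he',
    by simpa using hf', ?_⟩, ?_⟩
  · simpa using ((hasDerivAt_id τ).smul_const ![t, r, 0]).add_const ![0, 0, α]
  · rw [add_comm]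
    exact (h2rPathLength_line t r α).symm
  · rintro L ⟨c, c', hc, hc', h₀t, h₀r, hd₁, he₁, hf₁, rfl⟩
    obtain ⟨ht, hr⟩ := cylindrical_coords_eq hd₁ he₁ hf₁
    calc √(r ^ 2 + t ^ 2)
        = √((c 1 0 - c 0 0) ^ 2 + (c 1 1 - c 0 1) ^ 2) := by
          rw [h₀t, h₀r, sub_zero, sub_zero, ← sq_abs (c 1 1), ← ht, ← hr, add_comm]
      _ ≤ _ := sqrt_sq_add_sq_le_h2rPathLength hc hc'
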